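/- For every γ > 0, a configuration x ∈ ℝ^Λ is a stationary point of V_γ if and only if, setting u_n = (x_{n+1} − x_{n−1})/2 for n ∈ Λ, the pairs (x_n, u_n) form a period-N orbit of the map T₁, i.e. T₁(x_n, u_n) = (x_{n+1}, u_{n+1}) for all n ∈ Λ, where T₁(x,u) = (x′,u′) with x′ = x + u − γ^{-1} f(x) and u′ = u − γ^{-1}(f(x) + f(x′)). -/

import Mathlib

/-- Local double-well potential `U(ξ) = ξ⁴/4 − ξ²/2`. -/
noncomputable def U (ξ : ℝ) : ℝ := ξ^4/4 - ξ^2/2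

/-- The potential `V_γ(x) = Σᵢ U(xᵢ) + (γ/4) Σᵢ (x_{i+1} − x_i)²` on `ℝ^Λ`, `Λ = ℤ/Nℤ`. -/
noncomputable def V (N : ℕ) [NeZero N] (γ : ℝ) (x : ZMod N → ℝ) : ℝ :=
  (∑ i : ZMod N, U (x i)) + γ/4 * ∑ i : ZMod N, (x (i+1) - x i)^2

/-- The configuration `I⁺ = (1,…,1)`. -/
def Iplus (N : ℕ) : ZMod N → ℝ := fun _ => 1

/-- The configuration `I⁻ = (−1,…,−1)`. -/
def Iminus (N : ℕ) : ZMod N → ℝ := fun _ => -1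

/-- The configuration `O = (0,…,0)`. -/
def Opoint (N : ℕ) : ZMod N → ℝ := fun _ => 0

/-- The local drift `f(ξ) = ξ − ξ³ = −U′(ξ)`. -/
def fdrift (ξ : ℝ) : ℝ := ξ - ξ^3

/-- The set of stationary points of `V_γ`. -/
noncomputable def statPts (N : ℕ) [NeZero N] (γ : ℝ) : Set (ZMod N → ℝ) :=
  {x | fderiv ℝ (V N γ) x = 0}

/-- The Hessian matrix of `V_γ` at `x`. -/
noncomputable def hess (N : ℕ) [NeZero N] (γ : ℝ) (x : ZMod N → ℝ) :
    Matrix (ZMod N) (ZMod N) ℝ :=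
  Matrix.of fun i j => fderiv ℝ (fun y => fderiv ℝ (V N γ) y (Pi.single i 1)) x (Pi.single j 1)

open Classical in
/-- Number of negative eigenvalues of a real symmetric matrix. -/
noncomputable def negCount {n : Type*} [Fintype n] [DecidableEq n] (A : Matrix n n ℝ) : ℕ :=
  if h : A.IsHermitian then (Finset.univ.filter fun i => h.eigenvalues i < 0).card else 0

/-- `x` is a `k`-saddle of `V_γ`: a stationary point with nondegenerate Hessian having
exactly `k` negative eigenvalues. -/
noncomputable def IsKSaddle (N : ℕ) [NeZero N] (γ : ℝ) (k : ℕ) (x : ZMod N → ℝ) : Prop :=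
  fderiv ℝ (V N γ) x = 0 ∧ (hess N γ x).det ≠ 0 ∧ negCount (hess N γ x) = k

/-- The rotation `R(x₁,…,x_N) = (x₂,…,x_N,x₁)`. -/
def rotMap (N : ℕ) : Function.End (ZMod N → ℝ) := fun x i => x (i + 1)

/-- The mirror symmetry `S(x₁,…,x_N) = (x_N,…,x₁)`, i.e. `(Sx)_i = x_{1−i}` mod `N`. -/
def mirMap (N : ℕ) : Function.End (ZMod N → ℝ) := fun x i => x (1 - i)

/-- The point symmetry `C(x) = −x`. -/
def negMap (N : ℕ) : Function.End (ZMod N → ℝ) := fun x => -x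

/-- The symmetry group `G` generated by `R`, `S` and `C` (as a monoid of maps; since the
generators have finite order this coincides with the generated group). -/
def symGroup (N : ℕ) : Submonoid (Function.End (ZMod N → ℝ)) :=
  Submonoid.closure {rotMap N, mirMap N, negMap N}

/-- The orbit of a configuration `x` under the symmetry group `G`. -/
def Gorbit (N : ℕ) (x : ZMod N → ℝ) : Set (ZMod N → ℝ) :=
  {y | ∃ g ∈ symGroup N, g x = y}

/-- The bifurcation values `γ_M = (1 − cos(2πM/N))⁻¹`. -/
noncomputable def gammaM (N M : ℕ) : ℝ := (1 - Real.cos (2 * Real.pi * M / N))⁻¹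

/-- Complete elliptic integral of the first kind. -/
noncomputable def ellK (κ : ℝ) : ℝ :=
  ∫ t in (0:ℝ)..(Real.pi/2), 1 / Real.sqrt (1 - κ^2 * Real.sin t ^ 2)

/-- Complete elliptic integral of the second kind. -/
noncomputable def ellE (κ : ℝ) : ℝ :=
  ∫ t in (0:ℝ)..(Real.pi/2), Real.sqrt (1 - κ^2 * Real.sin t ^ 2)

/-- The twist map `T₁(x,u) = (x′,u′)`, `x′ = x + u − γ⁻¹ f(x)`,
`u′ = u − γ⁻¹ (f(x) + f(x′))`. -/
noncomputable def T1 (γ : ℝ) (p : ℝ × ℝ) : ℝ × ℝ :=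
  (p.1 + p.2 - γ⁻¹ * fdrift p.1,
   p.2 - γ⁻¹ * (fdrift p.1 + fdrift (p.1 + p.2 - γ⁻¹ * fdrift p.1)))

/-!
The `n`-th partial derivative of `V_γ` is `−f(xₙ) − (γ/2)(x_{n+1} − 2xₙ + x_{n−1})`, so stationary
points solve `(γ/2)(x_{n+1} − 2xₙ + x_{n−1}) + f(xₙ) = 0` for all `n ∈ ℤ/Nℤ`. With
`uₙ = (x_{n+1} − x_{n−1})/2`, the first component of `T₁(xₙ, uₙ) = (x_{n+1}, u_{n+1})` is this
equation at `n`, and given it, the second component is the equation at `n + 1`.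
-/

theorem hasDerivAt_U (t : ℝ) : HasDerivAt U (-fdrift t) t :=
  (((hasDerivAt_pow 4 t).div_const 4).sub ((hasDerivAt_pow 2 t).div_const 2)).congr_deriv
    (by simp only [fdrift]; norm_num)

section Gradient

variable (N : ℕ) [NeZero N] (γ : ℝ) (x : ZMod N → ℝ)

local notation "π" => ContinuousLinearMap.proj (R := ℝ) (φ := fun _ : ZMod N => ℝ)

theorem hasFDerivAt_V :
    HasFDerivAt (V N γ)
      (∑ i, (-fdrift (x i)) • π i + (γ / 4) • ∑ i, (2 * (x (i + 1) - x i)) • (π (i + 1) - π i)) x := by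
  refine (HasFDerivAt.fun_sum fun i _ => ?_).add
    (HasFDerivAt.const_mul (HasFDerivAt.fun_sum fun i _ => ?_) _)
  · exact (hasDerivAt_U (x i)).comp_hasFDerivAt x (π i).hasFDerivAt
  · exact ((π (i + 1) - π i).hasFDerivAt.pow 2).congr_fderiv (by norm_num)

theorem fderiv_V_single (n : ZMod N) :
    fderiv ℝ (V N γ) x (Pi.single n 1) =
      -(γ / 2 * (x (n + 1) - 2 * x n + x (n - 1)) + fdrift (x n)) := by
  have shift : ∀ i : ZMod N, (i + 1 = n) = (i = n - 1) := fun i => propext eq_sub_iff_add_eq.symm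
  simp only [(hasFDerivAt_V N γ x).fderiv, add_apply, FunLike.coe_sum, Finset.sum_apply,
    smul_apply, ContinuousLinearMap.proj_apply, sub_apply, smul_eq_mul, Pi.single_apply, shift, mul_sub, mul_ite, mul_one, mul_zero, Finset.sum_sub_distrib, Finset.sum_ite_eq',
    Finset.mem_univ, if_true, sub_add_cancel]
  ring

theorem fderiv_V_eq_zero_iff :
    fderiv ℝ (V N γ) x = 0 ↔
      ∀ n : ZMod N, γ / 2 * (x (n + 1) - 2 * x n + x (n - 1)) + fdrift (x n) = 0 := by
  constructor
  · intro h n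
    rw [← neg_eq_zero, ← fderiv_V_single, h, zero_apply]
  · intro h
    refine ContinuousLinearMap.coe_injective ((Pi.basisFun ℝ (ZMod N)).ext fun n => ?_)
    simp [fderiv_V_single, h]

end Gradient

theorem T1_eq_iff {γ : ℝ} (hγ : γ ≠ 0) (a b c d : ℝ) :
    T1 γ (b, (c - a) / 2) = (c, (d - b) / 2) ↔
      γ / 2 * (c - 2 * b + a) + fdrift b = 0 ∧ γ / 2 * (d - 2 * c + b) + fdrift c = 0 := by
  have position_eq_iff : b + (c - a) / 2 - γ⁻¹ * fdrift b = c ↔ γ / 2 * (c - 2 * b + a) + fdrift b = 0 := by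
    constructor <;> intro h <;> field_simp at h ⊢ <;> linarith
  simp only [T1, Prod.mk.injEq]
  constructor
  · rintro ⟨h₁, h₂⟩
    refine ⟨position_eq_iff.1 h₁, ?_⟩
    rw [h₁] at h₂
    field_simp at h₁ h₂ ⊢
    linarith
  · rintro ⟨h₁, h₂⟩
    have hx' := position_eq_iff.2 h₁
    refine ⟨hx', ?_⟩
    rw [hx']
    field_simp at h₁ hx' ⊢
    linarith

theorem statement4_general (N : ℕ) [NeZero N] (γ : ℝ) (hγ : 0 < γ)
    (x : ZMod N → ℝ) :
    fderiv ℝ (V N γ) x = 0 ↔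
      ∀ n : ZMod N,
        T1 γ (x n, (x (n+1) - x (n-1))/2) = (x (n+1), (x (n+1+1) - x n)/2) := by
  simp only [fderiv_V_eq_zero_iff, T1_eq_iff hγ.ne']
  refine ⟨fun h n => ⟨h n, by simpa using h (n + 1)⟩, fun h n => (h n).1⟩

/-- `x` is a stationary point of `V_γ` iff, with `uₙ = (x_{n+1} − x_{n−1})/2`,
the pairs `(xₙ,uₙ)` form a period-`N` orbit of the twist map `T₁`. -/
theorem statement4 (N : ℕ) [NeZero N] (hN : 2 ≤ N) (γ : ℝ) (hγ : 0 < γ)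
    (x : ZMod N → ℝ) :
    fderiv ℝ (V N γ) x = 0 ↔
      ∀ n : ZMod N,
        T1 γ (x n, (x (n+1) - x (n-1))/2) = (x (n+1), (x (n+1+1) - x n)/2) :=
  statement4_general N γ hγ x
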